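/- Let R be a commutative ring and consider the free commutative R-algebra on labeled trees with the shift S_r extended multiplicatively: S_r(τ₁ · τ₂) = S_r(τ₁) · S_r(τ₂). Then for all r, s ∈ R, the composite of shifts satisfies: if one hats both steps into distinct copies (L̂ then L̂'), the twofold shift relabels each noise edge into L ⊔ L̂ ⊔ L̂' with weight r^{#L̂-edges} s^{#L̂'-edges}, and collapsing L̂' onto L̂ (by the forgetful map identifying the two hatted copies and summing) yields S_{r+s}: i.e. collapse ∘ (S_s on hatted copy) ∘ S_r = S_{r+s}. -/
import Mathlib


open scoped Classical

/-- Onefold shift `S_r`: sum over Boolean hattings of the `n τ` noise edges,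
weighted by `r ^ #hatted`. -/
noncomputable def shiftOne {B R : Type*} [CommRing R] (n : B → ℕ) (r : R)
    (x : B →₀ R) : (Σ τ : B, Fin (n τ) → Bool) →₀ R :=
  x.sum fun τ c => ∑ s : Fin (n τ) → Bool,
    Finsupp.single ⟨τ, s⟩ (c * r ^ (Finset.univ.filter fun i => s i = true).card)

/-- Second shift into a distinct hatted copy: edges already hatted (label `1`)
stay hatted, unhatted edges are relabeled to `0` (original) or `2` (second
hatted copy), weighted by `s ^ #(second copy)`. -/
noncomputable def shiftTwo {B R : Type*} [CommRing R] (n : B → ℕ) (s : R)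
    (x : (Σ τ : B, Fin (n τ) → Bool) →₀ R) : (Σ τ : B, Fin (n τ) → Fin 3) →₀ R :=
  x.sum fun σ c =>
    ∑ t ∈ Finset.univ.filter
        (fun t : Fin (n σ.1) → Bool => ∀ i, t i = true → σ.2 i = false),
      Finsupp.single
        ⟨σ.1, fun i => if σ.2 i then (1 : Fin 3) else if t i then 2 else 0⟩
        (c * s ^ (Finset.univ.filter fun i => t i = true).card)

/-- Collapse identifying the two hatted copies (labels `1` and `2` both become
hatted). -/
noncomputable def collapseHats {B R : Type*} [CommRing R] (n : B → ℕ)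
    (x : (Σ τ : B, Fin (n τ) → Fin 3) →₀ R) : (Σ τ : B, Fin (n τ) → Bool) →₀ R :=
  x.sum fun σ c => Finsupp.single ⟨σ.1, fun i => decide (σ.2 i ≠ 0)⟩ c

/-- Semigroup property of shifts: collapsing the twofold shift gives
`S_{r+s}`: `collapse ∘ S'_s ∘ S_r = S_{r+s}`. -/
theorem stmt_17 {B R : Type*} [CommRing R] (n : B → ℕ) (r s : R) (τ : B) :
    collapseHats n (shiftTwo n s (shiftOne n r (Finsupp.single τ 1)))
      = shiftOne n (r + s) (Finsupp.single τ 1) := by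
  classical
  have h1 : ∀ (c : R), shiftOne n c (Finsupp.single τ 1)
      = ∑ u : Fin (n τ) → Bool, Finsupp.single (⟨τ, u⟩ : Σ τ, Fin (n τ) → Bool)
          (c ^ (Finset.univ.filter fun i => u i = true).card) := by
    intro c
    rw [shiftOne, Finsupp.sum_single_index] <;> simp
  rw [h1, h1]
  rw [shiftTwo, ← Finsupp.sum_finset_sum_index (by intro a; simp)
    (by intro a b₁ b₂; simp [add_mul, Finsupp.single_add, Finset.sum_add_distrib])]
  have h2 : ∀ (u : Fin (n τ) → Bool) (c : R),
      (Finsupp.single (⟨τ, u⟩ : Σ τ, Fin (n τ) → Bool) c).sum (fun σ c =>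
        ∑ t ∈ Finset.univ.filter
            (fun t : Fin (n σ.1) → Bool => ∀ i, t i = true → σ.2 i = false),
          Finsupp.single
            (⟨σ.1, fun i => if σ.2 i then (1 : Fin 3) else if t i then 2 else 0⟩ :
              Σ τ : B, Fin (n τ) → Fin 3)
            (c * s ^ (Finset.univ.filter fun i => t i = true).card))
      = ∑ t ∈ Finset.univ.filter
            (fun t : Fin (n τ) → Bool => ∀ i, t i = true → u i = false),
          Finsupp.single
            (⟨τ, fun i => if u i then (1 : Fin 3) else if t i then 2 else 0⟩ :
              Σ τ : B, Fin (n τ) → Fin 3)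
            (c * s ^ (Finset.univ.filter fun i => t i = true).card) :=
    fun u c => Finsupp.sum_single_index (by simp)
  simp only [h2]
  rw [collapseHats, ← Finsupp.sum_finset_sum_index (by intro a; simp)
    (by intro a b₁ b₂; simp [Finsupp.single_add])]
  have h4 : ∀ (u : Fin (n τ) → Bool),
      (∑ t ∈ Finset.univ.filter
            (fun t : Fin (n τ) → Bool => ∀ i, t i = true → u i = false),
          Finsupp.single
            (⟨τ, fun i => if u i then (1 : Fin 3) else if t i then 2 else 0⟩ :
              Σ τ : B, Fin (n τ) → Fin 3)
            (r ^ (Finset.univ.filter fun i => u i = true).card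
              * s ^ (Finset.univ.filter fun i => t i = true).card)).sum
        (fun σ c => Finsupp.single
          (⟨σ.1, fun i => decide (σ.2 i ≠ 0)⟩ : Σ τ : B, Fin (n τ) → Bool) c)
      = ∑ t ∈ Finset.univ.filter
            (fun t : Fin (n τ) → Bool => ∀ i, t i = true → u i = false),
          Finsupp.single
            (⟨τ, fun i => u i || t i⟩ : Σ τ : B, Fin (n τ) → Bool)
            (r ^ (Finset.univ.filter fun i => u i = true).card
              * s ^ (Finset.univ.filter fun i => t i = true).card) := by
    intro u
    rw [← Finsupp.sum_finset_sum_index (by intro a; simp)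
      (by intro a b₁ b₂; simp [Finsupp.single_add])]
    refine Finset.sum_congr rfl fun t _ => ?_
    rw [Finsupp.sum_single_index (by simp)]
    congr 1
    refine Sigma.ext rfl (heq_of_eq ?_)
    funext i
    cases hu : u i <;> cases ht : t i <;> simp [hu, ht]
  simp only [h4]
  have hpow : ∀ v : Fin (n τ) → Bool,
      ((r + s) ^ (Finset.univ.filter fun i => v i = true).card)
      = ∑ U ∈ (Finset.univ.filter fun i => v i = true).powerset,
          r ^ U.card * s ^ ((Finset.univ.filter fun i => v i = true) \ U).card := by
    intro v
    rw [← Finset.prod_const, Finset.prod_add]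
    simp [Finset.prod_const]
  simp only [hpow, Finsupp.single_finset_sum]
  rw [Finset.sum_sigma', Finset.sum_sigma']
  refine Finset.sum_nbij'
    (fun p : Σ _ : Fin (n τ) → Bool, Fin (n τ) → Bool =>
      (⟨fun i => p.1 i || p.2 i, Finset.univ.filter fun i => p.1 i = true⟩ :
        Σ _ : Fin (n τ) → Bool, Finset (Fin (n τ))))
    (fun q : Σ _ : Fin (n τ) → Bool, Finset (Fin (n τ)) =>
      (⟨fun i => decide (i ∈ q.2), fun i => q.1 i && !(decide (i ∈ q.2))⟩ :
        Σ _ : Fin (n τ) → Bool, Fin (n τ) → Bool))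
    ?_ ?_ ?_ ?_ ?_
  · rintro ⟨u, t⟩ hp
    simp only [Finset.mem_sigma, Finset.mem_univ, true_and, Finset.mem_powerset] at *
    intro i hi
    simp only [Finset.mem_filter, Finset.mem_univ, true_and] at *
    simp [hi]
  · rintro ⟨v, U⟩ hq
    simp only [Finset.mem_sigma, Finset.mem_univ, true_and, Finset.mem_powerset,
      Finset.mem_filter] at *
    intro i hi
    simp only [Bool.and_eq_true, Bool.not_eq_true'] at hi
    simp [hi.2]
  · rintro ⟨u, t⟩ hp
    simp only [Finset.mem_sigma, Finset.mem_univ, true_and, Finset.mem_filter] at hp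
    refine Sigma.ext ?_ (heq_of_eq ?_)
    · funext i; simp
    · funext i
      cases hu : u i <;> cases ht : t i <;> simp [hu, ht]
      exact absurd (hp i ht) (by simp [hu])
  · rintro ⟨v, U⟩ hq
    simp only [Finset.mem_sigma, Finset.mem_univ, true_and, Finset.mem_powerset] at hq
    refine Sigma.ext ?_ (heq_of_eq ?_)
    · funext i
      by_cases h : i ∈ U
      · have := hq h
        simp only [Finset.mem_filter, Finset.mem_univ, true_and] at this
        simp [h, this]
      · simp [h]
    · ext i; simp
  · rintro ⟨u, t⟩ hp
    simp only [Finset.mem_sigma, Finset.mem_univ, true_and, Finset.mem_filter] at hp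
    have hset : (Finset.univ.filter fun i => t i = true)
        = (Finset.univ.filter fun i => (u i || t i) = true) \
            (Finset.univ.filter fun i => u i = true) := by
      ext i
      simp only [Finset.mem_filter, Finset.mem_univ, true_and, Finset.mem_sdiff,
        Bool.or_eq_true]
      cases hu : u i <;> cases ht : t i <;>
        simp_all [hp i]
    dsimp only
    rw [hset]
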